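/- arXiv:2011.09234 — 7 statements merged into one kernel-verified Lean document; each statement's English description precedes it below -/
import Mathlib

section
/- If R is the smallest positive root of 2R² + 3√3(e−1)R + 3(1−e) = 0, then for all r with 0 ≤ r < R we have √3·r/((√3 − r)(√3 − 2r)) < √3/(√3 − r) − 1/e. -/
/-!
Write `f c x = 2x² + 3√3(c - 1)x + 3(1 - c)` (`radiusQuadratic` below). Clearing denominators, the inequality at `r` is
exactly `f e r < 0` as long as `2r < √3`. For `c ≥ 1` the quadratic `f c` is strictly increasing on
`[0, ∞)`, so `f e r < f e R = 0` for `0 ≤ r < R`; and `2R < √3` because `f c (√3/2) = 3c/2 > 0`.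
-/

open Real Set

noncomputable def radiusQuadratic (c x : ℝ) : ℝ :=
  2 * x ^ 2 + 3 * √3 * (c - 1) * x + 3 * (1 - c)

namespace radiusQuadratic

variable {c : ℝ}

theorem strictMonoOn (hc : 1 ≤ c) : StrictMonoOn (radiusQuadratic c) (Ici 0) := by
  intro x hx y hy hxy
  have hslope : 0 < 2 * (x + y) + 3 * √3 * (c - 1) := by
    have : 0 ≤ 3 * √3 * (c - 1) := by have := sqrt_nonneg 3; positivity
    linarith [mem_Ici.mp hx, mem_Ici.mp hy]
  have hdiff : radiusQuadratic c y - radiusQuadratic c x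
      = (y - x) * (2 * (x + y) + 3 * √3 * (c - 1)) := by
    unfold radiusQuadratic; ring
  linarith [mul_pos (sub_pos.mpr hxy) hslope]

theorem apply_sqrt_three_div_two (c : ℝ) : radiusQuadratic c (√3 / 2) = 3 * c / 2 := by
  have hs : √3 ^ 2 = 3 := sq_sqrt (by norm_num)
  unfold radiusQuadratic
  linear_combination (3 / 2 * c - 1) * hs

theorem two_mul_lt_sqrt_three_of_eq_zero (hc : 1 ≤ c) {R : ℝ} (hR₀ : 0 ≤ R)
    (hR : radiusQuadratic c R = 0) : 2 * R < √3 := by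
  have hpos : radiusQuadratic c R < radiusQuadratic c (√3 / 2) := by
    rw [hR, apply_sqrt_three_div_two]; linarith
  have := (strictMonoOn hc).lt_iff_lt hR₀ (by positivity : (0 : ℝ) ≤ √3 / 2) |>.mp hpos
  linarith

end radiusQuadratic

theorem sqrt_three_mul_div_lt_iff_radiusQuadratic_neg {c r : ℝ} (hc : 0 < c) (hr : 2 * r < √3) :
    √3 * r / ((√3 - r) * (√3 - 2 * r)) < √3 / (√3 - r) - 1 / c ↔ radiusQuadratic c r < 0 := by
  have hs : √3 ^ 2 = 3 := sq_sqrt (by norm_num)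
  have hs₀ : 0 < √3 := by positivity
  have h₁ : 0 < √3 - r := by linarith
  have h₂ : 0 < √3 - 2 * r := by linarith
  rw [div_sub_div _ _ h₁.ne' hc.ne', div_lt_div_iff₀ (mul_pos h₁ h₂) (mul_pos h₁ hc)]
  have hkey : (√3 * c - (√3 - r) * 1) * ((√3 - r) * (√3 - 2 * r)) - √3 * r * ((√3 - r) * c)
      = -((√3 - r) * radiusQuadratic c r) := by
    unfold radiusQuadratic; linear_combination (√3 - r) * (c - 1) * hs
  rw [← sub_pos, hkey, neg_pos]
  simpa using mul_lt_mul_iff_of_pos_left (b := radiusQuadratic c r) (c := 0) h₁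

theorem stmt3 (R : ℝ)
    (hR : IsLeast {R : ℝ | 0 < R ∧
        2 * R ^ 2 + 3 * Real.sqrt 3 * (Real.exp 1 - 1) * R + 3 * (1 - Real.exp 1) = 0} R) :
    ∀ r : ℝ, 0 ≤ r → r < R →
      Real.sqrt 3 * r / ((Real.sqrt 3 - r) * (Real.sqrt 3 - 2 * r)) <
        Real.sqrt 3 / (Real.sqrt 3 - r) - 1 / Real.exp 1 := by
  obtain ⟨⟨hR₀, hfR⟩, -⟩ := hR
  intro r hr₀ hrR
  have he : 1 ≤ exp 1 := one_le_exp zero_le_one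
  have hfR : radiusQuadratic (exp 1) R = 0 := hfR
  have hR : 2 * R < √3 := radiusQuadratic.two_mul_lt_sqrt_three_of_eq_zero he hR₀.le hfR
  rw [sqrt_three_mul_div_lt_iff_radiusQuadratic_neg (exp_pos 1) (by linarith), ← hfR]
  exact radiusQuadratic.strictMonoOn he hr₀ (mem_Ici.mpr hR₀.le) hrR
end

section
/- For every real c with 1/e < c ≤ (e + 1/e)/2, the open disc {w ∈ ℂ : |w − c| < c − 1/e} is contained in the set {w ∈ ℂ : w ≠ 0 and |Log w| < 1}, where Log denotes the principal branch of the logarithm. -/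
/-!
Write `w = exp (u + iθ)` with `|θ| ≤ π`. Since `cosh² r - sinh² r = 1`, one has
`|w - cosh r|² - sinh² r = 2|w| (cosh u - cosh r cos θ)`, so the disc of centre `cosh r` and
radius `sinh r` is the region `cosh u < cosh r cos θ`. It remains to see that `u² + θ² ≥ r²`
forces `cosh r cos θ ≤ cosh u`: with `a, b = (r ± u)/2` and `m = |θ|/2` one has `ab ≤ m²`,
and in half-angle form the inequality reads `tanh a tanh b ≤ tan² m`, which follows from
`tanh x ≤ x ≤ tan x`.
For `r = 1` the disc is centred at `(e + 1/e)/2` with radius `(e - 1/e)/2`, and every disc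
`|w - c| < c - 1/e` with `c ≤ (e + 1/e)/2` lies inside it.
-/

open Real

lemma Real.sinh_le_mul_cosh {x : ℝ} (hx : 0 ≤ x) : sinh x ≤ x * cosh x := by
  let f : ℝ → ℝ := fun t ↦ t * cosh t - sinh t
  have hf (t : ℝ) : HasDerivAt f (t * sinh t) t :=
    (((hasDerivAt_id' t).fun_mul (hasDerivAt_cosh t)).fun_sub (hasDerivAt_sinh t)).congr_deriv
      (by ring)
  have hmono : MonotoneOn f (Set.Ici 0) :=
    monotoneOn_of_deriv_nonneg (convex_Ici 0)
      (fun t _ ↦ (hf t).continuousAt.continuousWithinAt)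
      (fun t _ ↦ (hf t).differentiableAt.differentiableWithinAt)
      (fun t ht ↦ by
        rw [interior_Ici, Set.mem_Ioi] at ht
        rw [(hf t).deriv]
        exact mul_nonneg ht.le (sinh_nonneg_iff.2 ht.le))
  have := hmono (Set.mem_Ici.2 le_rfl) hx hx
  simp only [f, zero_mul, sinh_zero, sub_zero] at this
  linarith

lemma Real.mul_cos_le_sin {x : ℝ} (hx0 : 0 ≤ x) (hx : x ≤ π / 2) : x * cos x ≤ sin x := by
  rcases hx.lt_or_eq with hx | rfl
  · have hcos : 0 < cos x := cos_pos_of_mem_Ioo ⟨by linarith [pi_pos], hx⟩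
    simpa [tan_eq_sin_div_cos, le_div_iff₀ hcos] using le_tan hx0 hx
  · simp

lemma Real.cosh_add_mul_cos_two_mul_le_cosh_sub {a b m : ℝ} (ha : 0 ≤ a) (hb : 0 ≤ b)
    (hm0 : 0 ≤ m) (hm : m ≤ π / 2) (hab : a * b ≤ m ^ 2) :
    cosh (a + b) * cos (2 * m) ≤ cosh (a - b) := by
  have key : sinh a * sinh b * cos m ^ 2 ≤ cosh a * cosh b * sin m ^ 2 :=
    calc sinh a * sinh b * cos m ^ 2
        ≤ (a * cosh a) * (b * cosh b) * cos m ^ 2 := by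
          gcongr
          · exact sinh_le_mul_cosh ha
          · exact sinh_le_mul_cosh hb
      _ = a * b * (cosh a * cosh b * cos m ^ 2) := by ring
      _ ≤ m ^ 2 * (cosh a * cosh b * cos m ^ 2) := by gcongr
      _ = cosh a * cosh b * (m * cos m) ^ 2 := by ring
      _ ≤ cosh a * cosh b * sin m ^ 2 := by
          gcongr
          · exact mul_nonneg hm0 (cos_nonneg_of_mem_Icc ⟨by linarith, hm⟩)
          · exact mul_cos_le_sin hm0 hm
  rw [sin_sq] at key
  rw [cosh_add, cosh_sub, cos_two_mul]
  linear_combination 2 * key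

lemma Real.cosh_mul_cos_le_cosh {r u θ : ℝ} (hu : |u| ≤ r) (hθ : |θ| ≤ π)
    (h : r ^ 2 ≤ u ^ 2 + θ ^ 2) : cosh r * cos θ ≤ cosh u := by
  obtain ⟨hu₁, hu₂⟩ := abs_le.1 hu
  have := cosh_add_mul_cos_two_mul_le_cosh_sub (a := (r + u) / 2) (b := (r - u) / 2)
    (m := |θ| / 2) (by linarith) (by linarith) (by positivity) (by linarith)
    (by nlinarith [sq_abs θ])
  rwa [show (r + u) / 2 + (r - u) / 2 = r by ring, show (r + u) / 2 - (r - u) / 2 = u by ring,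
    mul_div_cancel₀ _ two_ne_zero, cos_abs] at this

lemma Complex.norm_sub_cosh_sq_sub_sinh_sq (r : ℝ) {w : ℂ} (hw : w ≠ 0) :
    ‖w - (Real.cosh r : ℂ)‖ ^ 2 - Real.sinh r ^ 2 =
      2 * ‖w‖ * (Real.cosh (Real.log ‖w‖) - Real.cosh r * Real.cos (arg w)) := by
  have hnorm : ‖w‖ ^ 2 = w.re ^ 2 + w.im ^ 2 := by rw [Complex.sq_norm, normSq_apply]; ring
  have hsub : ‖w - (Real.cosh r : ℂ)‖ ^ 2 = (w.re - Real.cosh r) ^ 2 + w.im ^ 2 := by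
    rw [Complex.sq_norm, normSq_apply, sub_re, sub_im, ofReal_re, ofReal_im, sub_zero]; ring
  have hinv : ‖w‖ * ‖w‖⁻¹ = 1 := mul_inv_cancel₀ (norm_ne_zero_iff.2 hw)
  rw [hsub, Real.cosh_log (norm_pos_iff.2 hw)]
  linear_combination
    (-1 : ℝ) * hnorm + Real.cosh_sq r - hinv + 2 * Real.cosh r * norm_mul_cos_arg w

lemma Complex.norm_log_lt_of_norm_sub_cosh_lt_sinh {r : ℝ} {w : ℂ}
    (hw : ‖w - (Real.cosh r : ℂ)‖ < Real.sinh r) : w ≠ 0 ∧ ‖log w‖ < r := by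
  have hr : 0 < r := Real.sinh_pos_iff.1 ((norm_nonneg _).trans_lt hw)
  have hw0 : w ≠ 0 := by
    rintro rfl
    rw [zero_sub, norm_neg, norm_real, Real.norm_of_nonneg (Real.cosh_pos r).le] at hw
    linarith [Real.sinh_lt_cosh r]
  have hcos : Real.cosh (Real.log ‖w‖) < Real.cosh r * Real.cos (arg w) := by
    have hsq : ‖w - (Real.cosh r : ℂ)‖ ^ 2 < Real.sinh r ^ 2 := by gcongr
    have hneg :
        2 * ‖w‖ * (Real.cosh (Real.log ‖w‖) - Real.cosh r * Real.cos (arg w)) < 0 := by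
      rw [← norm_sub_cosh_sq_sub_sinh_sq r hw0]; linarith
    exact sub_neg.1 (neg_of_mul_neg_right hneg (by positivity))
  have hu : |Real.log ‖w‖| ≤ r := by
    have := hcos.trans_le (mul_le_of_le_one_right (Real.cosh_pos r).le (Real.cos_le_one _))
    exact (Real.cosh_lt_cosh.1 this).le.trans_eq (abs_of_pos hr)
  refine ⟨hw0, ?_⟩
  rw [← sq_lt_sq₀ (norm_nonneg _) hr.le, Complex.sq_norm, normSq_apply, log_re, log_im]
  by_contra! h
  exact (Real.cosh_mul_cos_le_cosh hu (abs_arg_le_pi w) (by nlinarith)).not_gt hcos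

lemma Complex.norm_sub_ofReal_lt_of_le {w : ℂ} {c C k : ℝ} (hcC : c ≤ C)
    (hw : ‖w - c‖ < c - k) : ‖w - C‖ < C - k :=
  calc ‖w - C‖ ≤ ‖w - c‖ + ‖(c : ℂ) - C‖ := norm_sub_le_norm_sub_add_norm_sub _ _ _
    _ < (c - k) + (C - c) := by
        rw [← ofReal_sub, norm_real, norm_of_nonpos (by linarith), neg_sub]
        gcongr
    _ = C - k := by ring

theorem stmt4_general (c : ℝ)
    (hc2 : c ≤ (Real.exp 1 + 1 / Real.exp 1) / 2) :
    ∀ w : ℂ, ‖w - (c : ℂ)‖ < c - 1 / Real.exp 1 →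
      w ≠ 0 ∧ ‖Complex.log w‖ < 1 := by
  intro w hw
  have hcosh : (Real.exp 1 + 1 / Real.exp 1) / 2 = cosh 1 := by rw [cosh_eq, exp_neg, one_div]
  have hinv : 1 / Real.exp 1 = cosh 1 - sinh 1 := by rw [cosh_sub_sinh, exp_neg, one_div]
  have hball : ‖w - (cosh 1 : ℂ)‖ < cosh 1 - 1 / Real.exp 1 :=
    Complex.norm_sub_ofReal_lt_of_le (hcosh ▸ hc2) hw
  rw [hinv, sub_sub_cancel] at hball
  exact Complex.norm_log_lt_of_norm_sub_cosh_lt_sinh hball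

theorem stmt4 (c : ℝ) (hc1 : 1 / Real.exp 1 < c)
    (hc2 : c ≤ (Real.exp 1 + 1 / Real.exp 1) / 2) :
    ∀ w : ℂ, ‖w - (c : ℂ)‖ < c - 1 / Real.exp 1 →
      w ≠ 0 ∧ ‖Complex.log w‖ < 1 :=
  stmt4_general c hc2
end

section
/- For every real c with 1/3 < c ≤ 5/3, the open disc {w = x + iy : |w − c| < c − 1/3} is contained in the region Ω_c bounded by the cardioid (9x² + 9y² − 18x + 5)² − 16(9x² + 9y² − 6x + 1) = 0, i.e., every point w = x+iy in the disc satisfies (9x² + 9y² − 18x + 5)² − 16(9x² + 9y² − 6x + 1) < 0. -/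
/-!
Centre the picture at `1/3` by writing `u = w - 1/3`. With `ρ = ‖u‖`, the cardioid polynomial
becomes `9 ((3ρ² - 4 Re u)² - 16ρ²)`, so `Ω_c` is the polar region `ρ < (4/3)(1 + cos θ)`.
The discs `|u - r| < r` all touch `0` and grow with `r`, so the given disc lies in the one with
`r = 4/3`, i.e. `ρ < (8/3) cos θ`, and `2 cos θ ≤ 1 + cos θ` finishes the proof.
-/

open Complex

theorem Complex.norm_sub_ofReal_lt_self_iff {z : ℂ} {r : ℝ} (hr : 0 ≤ r) :
    ‖z - r‖ < r ↔ normSq z < 2 * r * z.re := by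
  rw [← pow_lt_pow_iff_left₀ (norm_nonneg _) hr two_ne_zero, ← normSq_eq_norm_sq, normSq_apply,
    normSq_apply]
  simp only [sub_re, sub_im, ofReal_re, ofReal_im, sub_zero]
  constructor <;> intro h <;> nlinarith

theorem Complex.norm_sub_ofReal_lt_of_le_s5 {z : ℂ} {r R : ℝ} (h : ‖z - r‖ < r) (hrR : r ≤ R) :
    ‖z - R‖ < R := by
  have hr : 0 ≤ r := (norm_nonneg _).trans h.le
  rw [norm_sub_ofReal_lt_self_iff hr] at h
  rw [norm_sub_ofReal_lt_self_iff (hr.trans hrR)]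
  have hre : 0 < z.re := by nlinarith [normSq_nonneg z]
  nlinarith

theorem cardioid_polynomial_eq (w : ℂ) :
    (9 * w.re ^ 2 + 9 * w.im ^ 2 - 18 * w.re + 5) ^ 2 -
        16 * (9 * w.re ^ 2 + 9 * w.im ^ 2 - 6 * w.re + 1) =
      9 * ((3 * normSq (w - 1 / 3) - 4 * (w - 1 / 3).re) ^ 2 - 16 * normSq (w - 1 / 3)) := by
  simp only [normSq_apply, sub_re, sub_im, div_ofNat_re, div_ofNat_im, one_re, one_im]
  ring

theorem sq_cardioid_lt_of_normSq_lt {u : ℂ} (hu : normSq u < 8 / 3 * u.re) :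
    (3 * normSq u - 4 * u.re) ^ 2 < 16 * normSq u := by
  rw [normSq_eq_norm_sq] at *
  have hre : u.re ≤ ‖u‖ := re_le_norm u
  have hpos : 0 < ‖u‖ := by nlinarith [sq_nonneg ‖u‖]
  have hupper : 3 * ‖u‖ ^ 2 - 4 * u.re < 4 * ‖u‖ := by linarith
  have hlower : -(4 * ‖u‖) < 3 * ‖u‖ ^ 2 - 4 * u.re := by nlinarith
  nlinarith

theorem stmt5_general (c : ℝ) (hc2 : c ≤ 5 / 3) :
    ∀ w : ℂ, ‖w - (c : ℂ)‖ < c - 1 / 3 →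
      (9 * w.re ^ 2 + 9 * w.im ^ 2 - 18 * w.re + 5) ^ 2 -
        16 * (9 * w.re ^ 2 + 9 * w.im ^ 2 - 6 * w.re + 1) < 0 := by
  intro w hw
  have hdisc : ‖(w - 1 / 3) - ((c - 1 / 3 : ℝ) : ℂ)‖ < c - 1 / 3 := by
    convert hw using 2
    push_cast
    ring
  have hbig : ‖(w - 1 / 3) - ((4 / 3 : ℝ) : ℂ)‖ < 4 / 3 :=
    norm_sub_ofReal_lt_of_le_s5 hdisc (by linarith)
  rw [norm_sub_ofReal_lt_self_iff (by norm_num)] at hbig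
  rw [cardioid_polynomial_eq]
  nlinarith [sq_cardioid_lt_of_normSq_lt (u := w - 1 / 3) (by linarith)]

theorem stmt5 (c : ℝ) (hc1 : 1 / 3 < c) (hc2 : c ≤ 5 / 3) :
    ∀ w : ℂ, ‖w - (c : ℂ)‖ < c - 1 / 3 →
      (9 * w.re ^ 2 + 9 * w.im ^ 2 - 18 * w.re + 5) ^ 2 -
        16 * (9 * w.re ^ 2 + 9 * w.im ^ 2 - 6 * w.re + 1) < 0 :=
  stmt5_general c hc2
end

section
/- For every real c with √2 − 1 < c ≤ √2 + 1, the open disc {w ∈ ℂ : |w − c| < 1 − |√2 − c|} is contained in the lune region {w ∈ ℂ : |w² − 1| < 2|w|}. -/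
/-! The disc lies in `{|w - 1| < √2} ∩ {√2 < |w + 1|}` by two triangle inequalities, and this
intersection lies in the lune because of the identity
`4|w|² - |w² - 1|² = (2 - |w - 1|²) (|w + 1|² - 2)`. -/

open Complex

lemma four_mul_normSq_sub_normSq_sq_sub_one (w : ℂ) :
    4 * normSq w - normSq (w ^ 2 - 1) = (2 - normSq (w - 1)) * (normSq (w + 1) - 2) := by
  simp only [normSq_apply, sub_re, sub_im, add_re, add_im, one_re, one_im, pow_two, mul_re,
    mul_im]
  ring

lemma norm_pow_two_sub_one_lt_two_mul_norm {w : ℂ} (h₁ : ‖w - 1‖ < √2) (h₂ : √2 < ‖w + 1‖) :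
    ‖w ^ 2 - 1‖ < 2 * ‖w‖ := by
  have h₁' : normSq (w - 1) < 2 := by
    rw [← Complex.sq_norm, ← Real.sq_sqrt zero_le_two]
    exact pow_lt_pow_left₀ h₁ (norm_nonneg _) two_ne_zero
  have h₂' : 2 < normSq (w + 1) := by
    rw [← Complex.sq_norm, ← Real.sq_sqrt zero_le_two]
    exact pow_lt_pow_left₀ h₂ (Real.sqrt_nonneg _) two_ne_zero
  refine lt_of_pow_lt_pow_left₀ 2 (by positivity) ?_
  rw [mul_pow, Complex.sq_norm, Complex.sq_norm]
  linarith [four_mul_normSq_sub_normSq_sq_sub_one w, mul_pos (sub_pos.2 h₁') (sub_pos.2 h₂')]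

section Disc

variable {s c : ℝ} {w : ℂ}

lemma norm_sub_one_lt_of_norm_sub_lt (hs : 1 ≤ s) (hw : ‖w - c‖ < 1 - |s - c|) :
    ‖w - 1‖ < s :=
  calc ‖w - 1‖ ≤ ‖w - c‖ + ‖(c : ℂ) - 1‖ := norm_sub_le_norm_sub_add_norm_sub _ _ _
    _ < 1 - |s - c| + |c - 1| := by
      rw [show (c : ℂ) - 1 = ((c - 1 : ℝ) : ℂ) by push_cast; rfl, norm_real, Real.norm_eq_abs]
      linarith
    _ ≤ s := by cases abs_cases (s - c) <;> cases abs_cases (c - 1) <;> linarith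

lemma lt_norm_add_one_of_norm_sub_lt (hw : ‖w - c‖ < 1 - |s - c|) : s < ‖w + 1‖ :=
  calc s ≤ c + 1 - (1 - |s - c|) := by linarith [le_abs_self (s - c)]
    _ < |c + 1| - ‖w - c‖ := by linarith [le_abs_self (c + 1)]
    _ = ‖(c : ℂ) + 1‖ - ‖w - c‖ := by
      rw [show (c : ℂ) + 1 = ((c + 1 : ℝ) : ℂ) by push_cast; rfl, norm_real, Real.norm_eq_abs]
    _ ≤ ‖w + 1‖ := by
      have := norm_sub_norm_le ((c : ℂ) + 1) (w + 1)
      rw [add_sub_add_right_eq_sub, norm_sub_rev] at this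
      linarith

end Disc

theorem stmt6_general (c : ℝ) :
    ∀ w : ℂ, ‖w - (c : ℂ)‖ < 1 - |Real.sqrt 2 - c| →
      ‖w ^ 2 - 1‖ < 2 * ‖w‖ := fun _ hw =>
  norm_pow_two_sub_one_lt_two_mul_norm
    (norm_sub_one_lt_of_norm_sub_lt Real.one_lt_sqrt_two.le hw)
    (lt_norm_add_one_of_norm_sub_lt hw)

theorem stmt6 (c : ℝ) (hc1 : Real.sqrt 2 - 1 < c) (hc2 : c ≤ Real.sqrt 2 + 1) :
    ∀ w : ℂ, ‖w - (c : ℂ)‖ < 1 - |Real.sqrt 2 - c| →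
      ‖w ^ 2 - 1‖ < 2 * ‖w‖ :=
  stmt6_general c
end

section
/- If R is the smallest positive root of (2 − 2√2)R² + √3(3√2 − 6)R + 3(2 − √2) = 0, then for all r with 0 ≤ r < R, √3·r/((√3 − r)(√3 − 2r)) < 1 − |√2 − √3/(√3 − r)|. -/
/-! The positive root of the quadratic is explicit, `R = √3 (1 - √2/2)`, and it is exactly the
radius at which `√3/(√3 - r)` reaches `√2`. Below it the absolute value opens as
`√2 - √3/(√3 - r)`, and after clearing the (positive) denominator `(√3 - r)(√3 - 2r)` the claimed
inequality becomes `q r > 0` for the quadratic `q` itself, which holds because `q` is concave,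
positive at `0` and vanishes at `R`. -/

open Real

namespace RadiusBound

noncomputable def q (r : ℝ) : ℝ :=
  (2 - 2 * √2) * r ^ 2 + √3 * (3 * √2 - 6) * r + 3 * (2 - √2)

noncomputable def criticalRadius : ℝ := √3 * (1 - √2 / 2)

lemma q_sub_q (r s : ℝ) :
    q r - q s = (s - r) * (3 * √3 * (2 - √2) + 2 * (√2 - 1) * (r + s)) := by
  unfold q; ring

lemma q_criticalRadius : q criticalRadius = 0 := by
  have h3 : √3 ^ 2 = 3 := sq_sqrt (by norm_num)
  have h2 : √2 ^ 2 = 2 := sq_sqrt (by norm_num)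
  unfold q criticalRadius
  linear_combination (-4 + 2 * √2 + √2 ^ 2 - √2 ^ 3 / 2) * h3 + (3 - 3 / 2 * √2) * h2

lemma sqrt_two_lt_two : √2 < 2 := by
  rw [sqrt_lt' two_pos]; norm_num

lemma criticalRadius_pos : 0 < criticalRadius :=
  mul_pos (sqrt_pos.2 three_pos) (by linarith [sqrt_two_lt_two])

lemma two_mul_criticalRadius_lt : 2 * criticalRadius < √3 := by
  have := sqrt_pos.2 (three_pos : (0 : ℝ) < 3)
  unfold criticalRadius
  nlinarith [one_lt_sqrt_two]

lemma q_factor_pos {r s : ℝ} (hr : 0 ≤ r) (hs : 0 ≤ s) :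
    0 < 3 * √3 * (2 - √2) + 2 * (√2 - 1) * (r + s) := by
  have h3 := sqrt_pos.2 (three_pos : (0 : ℝ) < 3)
  have := sub_pos.2 sqrt_two_lt_two
  have := sub_pos.2 one_lt_sqrt_two
  positivity

lemma eq_criticalRadius_of_q_eq_zero {R : ℝ} (hR : 0 < R) (hq : q R = 0) :
    R = criticalRadius := by
  have h := q_sub_q R criticalRadius
  rw [hq, q_criticalRadius, sub_zero, eq_comm, mul_eq_zero] at h
  rcases h with h | h
  · linarith
  · exact absurd h (q_factor_pos hR.le criticalRadius_pos.le).ne'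

lemma q_pos_of_lt_criticalRadius {r : ℝ} (hr : 0 ≤ r) (hrc : r < criticalRadius) : 0 < q r := by
  have h := q_sub_q r criticalRadius
  rw [q_criticalRadius, sub_zero] at h
  rw [h]
  exact mul_pos (sub_pos.2 hrc) (q_factor_pos hr criticalRadius_pos.le)

lemma sqrt_three_div_le_sqrt_two {r : ℝ} (hrc : r ≤ criticalRadius) :
    √3 / (√3 - r) ≤ √2 := by
  have h2 : √2 ^ 2 = 2 := sq_sqrt (by norm_num)
  have hr : 0 < √3 - r := by linarith [two_mul_criticalRadius_lt, criticalRadius_pos]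
  rw [div_le_iff₀ hr]
  have : √2 * (√3 - criticalRadius) = √3 := by
    unfold criticalRadius; linear_combination (√3 / 2) * h2
  nlinarith [sqrt_nonneg 2]

lemma lt_one_sub_iff_q_pos {r : ℝ} (hr : r < √3) (hr2 : 2 * r < √3) :
    √3 * r / ((√3 - r) * (√3 - 2 * r)) < 1 - (√2 - √3 / (√3 - r)) ↔ 0 < q r := by
  have h3 : √3 ^ 2 = 3 := sq_sqrt (by norm_num)
  have hr' : 0 < √3 - r := sub_pos.2 hr
  have hr2' : 0 < √3 - 2 * r := sub_pos.2 hr2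
  have hsplit : 1 - (√2 - √3 / (√3 - r)) =
      ((1 - √2) * ((√3 - r) * (√3 - 2 * r)) + √3 * (√3 - 2 * r)) /
        ((√3 - r) * (√3 - 2 * r)) := by
    rw [eq_div_iff (mul_pos hr' hr2').ne']
    field_simp
    ring
  rw [hsplit, div_lt_div_iff_of_pos_right (mul_pos hr' hr2'), ← sub_pos]
  have : (1 - √2) * ((√3 - r) * (√3 - 2 * r)) + √3 * (√3 - 2 * r) - √3 * r = q r := by
    unfold q; linear_combination (2 - √2) * h3
  rw [this]

end RadiusBound

theorem stmt10 (R : ℝ)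
    (hR : IsLeast {R : ℝ | 0 < R ∧
        (2 - 2 * Real.sqrt 2) * R ^ 2 + Real.sqrt 3 * (3 * Real.sqrt 2 - 6) * R +
          3 * (2 - Real.sqrt 2) = 0} R) :
    ∀ r : ℝ, 0 ≤ r → r < R →
      Real.sqrt 3 * r / ((Real.sqrt 3 - r) * (Real.sqrt 3 - 2 * r)) <
        1 - |Real.sqrt 2 - Real.sqrt 3 / (Real.sqrt 3 - r)| := by
  intro r hr hrR
  obtain ⟨⟨hRpos, hqR⟩, -⟩ := hR
  rw [RadiusBound.eq_criticalRadius_of_q_eq_zero hRpos hqR] at hrR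
  have h2r : 2 * r < √3 := by linarith [RadiusBound.two_mul_criticalRadius_lt]
  rw [abs_of_nonneg (sub_nonneg.2 (RadiusBound.sqrt_three_div_le_sqrt_two hrR.le)),
    RadiusBound.lt_one_sub_iff_q_pos (by linarith) h2r]
  exact RadiusBound.q_pos_of_lt_criticalRadius hr hrR
end

section
/- For every real c with 2(√2 − 1) < c ≤ √2, the open disc {w ∈ ℂ : |w − c| < c − 2(√2 − 1)} is contained in ψ(𝔻), where ψ(z) = 1 + (z² + kz)/(k² − kz) with k = √2 + 1 and 𝔻 the open unit disc. -/
/-!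
Substituting `z = k t` turns `ψ` into `t ↦ (1 + t²) / (1 - t)`, and `|z| < 1` into
`|t| < √2 - 1 =: ρ`. The discs in question all lie in the disc `D` of centre `√2` and
radius `2 - √2`, so it suffices that for `w ∈ D` one root of `t² + w t + 1 - w` has
modulus `< ρ`. For roots `a, b` we have `|a|² |b|² = |1 - w|²`, while the parallelogram law
together with `(a - b)² = (w + 2)² - 8` bounds `|a|² + |b|²` from below; together these make
`(ρ² - |a|²)(ρ² - |b|²)` at most `2ρ (|w - √2|² - (2 - √2)²)`, which is negative on `D`.
-/

open Metric

theorem IsAlgClosed.exists_add_eq_and_mul_eq {K : Type*} [Field K] [IsAlgClosed K]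
    [NeZero (2 : K)] (p q : K) : ∃ a b : K, a + b = p ∧ a * b = q := by
  obtain ⟨s, hs⟩ := IsAlgClosed.exists_eq_mul_self (p ^ 2 - 4 * q)
  have h2 : (2 : K) ≠ 0 := NeZero.ne 2
  refine ⟨(p + s) / 2, (p - s) / 2, by field_simp; ring, ?_⟩
  field_simp
  linear_combination hs

theorem sq_norm_add_sq_norm_ge_of_add_eq_of_mul_eq {a b w : ℂ} (hsum : a + b = -w)
    (hprod : a * b = 1 - w) :
    ‖w‖ ^ 2 + ‖w + 2‖ ^ 2 - 8 ≤ 2 * (‖a‖ ^ 2 + ‖b‖ ^ 2) := by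
  have hdiff : (a - b) ^ 2 = (w + 2) ^ 2 - 8 := by
    linear_combination (a + b - w) * hsum - 4 * hprod
  have hdiff_norm : ‖w + 2‖ ^ 2 - 8 ≤ ‖a - b‖ ^ 2 := by
    have h := norm_sub_norm_le ((w + 2) ^ 2) 8
    rw [← norm_pow (a - b), hdiff]
    rw [norm_pow, Complex.norm_ofNat] at h
    linarith
  have hpar := parallelogram_law_with_norm ℝ a b
  rw [hsum, norm_neg] at hpar
  linarith

theorem sub_mul_sub_neg_of_mem_ball {w : ℂ} (hw : w ∈ ball (√2 : ℂ) (2 - √2)) {A B : ℝ}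
    (hsum : ‖w‖ ^ 2 + ‖w + 2‖ ^ 2 - 8 ≤ 2 * (A + B)) (hprod : A * B = ‖1 - w‖ ^ 2) :
    ((√2 - 1) ^ 2 - A) * ((√2 - 1) ^ 2 - B) < 0 := by
  have hr : √2 ^ 2 = 2 := Real.sq_sqrt (by norm_num)
  have hr1 := Real.one_lt_sqrt_two
  have hw2 : ‖w - √2‖ ^ 2 < (2 - √2) ^ 2 := by
    rw [mem_ball, Complex.dist_eq] at hw
    gcongr
  set R := (√2 - 1) ^ 2
  have hRsum := mul_le_mul_of_nonneg_left hsum (sq_nonneg (√2 - 1))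
  simp only [Complex.sq_norm, Complex.normSq_apply, Complex.sub_re, Complex.sub_im,
    Complex.add_re, Complex.add_im, Complex.ofReal_re, Complex.ofReal_im, Complex.one_re,
    Complex.one_im, Complex.re_ofNat, Complex.im_ofNat, sub_zero, add_zero, zero_sub]
    at hRsum hprod hw2
  calc (R - A) * (R - B) = R ^ 2 - R * (A + B) + A * B := by ring
    _ ≤ 2 * (√2 - 1) * ((w.re - √2) ^ 2 + w.im ^ 2 - (2 - √2) ^ 2) := by
      rw [hprod]
      linear_combination hRsum / 2 + (2 * w.re - w.re ^ 2 - w.im ^ 2 - 4 * √2 + √2 ^ 2 + 2) * hr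
    _ < 0 := mul_neg_of_pos_of_neg (by linarith) (by linarith)

theorem norm_lt_or_norm_lt_of_add_eq_of_mul_eq {a b w : ℂ}
    (hw : w ∈ ball (√2 : ℂ) (2 - √2)) (hsum : a + b = -w) (hprod : a * b = 1 - w) :
    ‖a‖ < √2 - 1 ∨ ‖b‖ < √2 - 1 := by
  have key := sub_mul_sub_neg_of_mem_ball hw
    (sq_norm_add_sq_norm_ge_of_add_eq_of_mul_eq hsum hprod)
    (by rw [← mul_pow, ← norm_mul, hprod])
  have hρ : 0 ≤ √2 - 1 := by linarith [Real.one_lt_sqrt_two]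
  rcases mul_neg_iff.1 key with ⟨ha, -⟩ | ⟨-, hb⟩
  · exact Or.inl (lt_of_pow_lt_pow_left₀ 2 hρ (by linarith))
  · exact Or.inr (lt_of_pow_lt_pow_left₀ 2 hρ (by linarith))

theorem exists_norm_lt_one_add_sq_eq_mul_of_mem_ball {w : ℂ}
    (hw : w ∈ ball (√2 : ℂ) (2 - √2)) :
    ∃ t : ℂ, ‖t‖ < √2 - 1 ∧ 1 + t ^ 2 = w * (1 - t) := by
  obtain ⟨a, b, hsum, hprod⟩ := IsAlgClosed.exists_add_eq_and_mul_eq (-w) (1 - w)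
  rcases norm_lt_or_norm_lt_of_add_eq_of_mul_eq hw hsum hprod with ha | hb
  · exact ⟨a, ha, by linear_combination a * hsum - hprod⟩
  · exact ⟨b, hb, by linear_combination b * hsum - hprod⟩

theorem one_add_div_sq_sub_mul_eq {k t : ℂ} (hk : k ≠ 0) (ht : t ≠ 1) :
    1 + ((k * t) ^ 2 + k * (k * t)) / (k ^ 2 - k * (k * t)) = (1 + t ^ 2) / (1 - t) := by
  have ht' : 1 - t ≠ 0 := sub_ne_zero.2 ht.symm
  field_simp
  ring

theorem stmt11_general (c : ℝ) (hc2 : c ≤ Real.sqrt 2) :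
    ∀ w : ℂ, ‖w - (c : ℂ)‖ < c - 2 * (Real.sqrt 2 - 1) →
      ∃ z : ℂ, ‖z‖ < 1 ∧
        1 + (z ^ 2 + ((Real.sqrt 2 : ℂ) + 1) * z) /
          (((Real.sqrt 2 : ℂ) + 1) ^ 2 - ((Real.sqrt 2 : ℂ) + 1) * z) = w := by
  intro w hw
  have hr : √2 ^ 2 = 2 := Real.sq_sqrt (by norm_num)
  have hr1 := Real.one_lt_sqrt_two
  have hball : w ∈ ball (√2 : ℂ) (2 - √2) := by
    refine ball_subset_ball' ?_ (by rwa [mem_ball, Complex.dist_eq])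
    rw [Complex.isometry_ofReal.dist_eq, Real.dist_eq, abs_of_nonpos (by linarith)]
    linarith
  obtain ⟨t, ht, hroot⟩ := exists_norm_lt_one_add_sq_eq_mul_of_mem_ball hball
  have hk : ‖(√2 : ℂ) + 1‖ = √2 + 1 := by
    rw [← Complex.ofReal_one, ← Complex.ofReal_add, Complex.norm_real,
      Real.norm_of_nonneg (by linarith)]
  have ht1 : t ≠ 1 := by rintro rfl; norm_num at ht; nlinarith
  refine ⟨((√2 : ℂ) + 1) * t, ?_, ?_⟩
  · calc ‖((√2 : ℂ) + 1) * t‖ = (√2 + 1) * ‖t‖ := by rw [norm_mul, hk]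
      _ < (√2 + 1) * (√2 - 1) := by gcongr
      _ = 1 := by rw [← sq_sub_sq, hr]; norm_num
  · have hk0 : (√2 : ℂ) + 1 ≠ 0 := by rw [← norm_ne_zero_iff, hk]; linarith
    rw [one_add_div_sq_sub_mul_eq hk0 ht1, div_eq_iff (sub_ne_zero.2 ht1.symm)]
    exact hroot

theorem stmt11 (c : ℝ) (hc1 : 2 * (Real.sqrt 2 - 1) < c) (hc2 : c ≤ Real.sqrt 2) :
    ∀ w : ℂ, ‖w - (c : ℂ)‖ < c - 2 * (Real.sqrt 2 - 1) →
      ∃ z : ℂ, ‖z‖ < 1 ∧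
        1 + (z ^ 2 + ((Real.sqrt 2 : ℂ) + 1) * z) /
          (((Real.sqrt 2 : ℂ) + 1) ^ 2 - ((Real.sqrt 2 : ℂ) + 1) * z) = w :=
  stmt11_general c hc2
end

section
/- The function f(z) = 3z(3 − 2√3 z)/(3 − √3 z)² satisfies f(0) = 0, f'(0) = 1, and sup over z in the unit disc of (1 − |z|²)|f'(z)| ≤ 1; that is, f is a normalized Bloch function. -/
/-!
With `c = √3` one has `f'(z) = 27 (1 - c z) / (3 - c z)³`, and the identity
`|3 - c z|² = 3 (|1 - c z|² + 2 (1 - |z|²))` turns the Bloch bound into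
`27 a p² ≤ (a + 2 p)³` for `a = |1 - c z|²`, `p = 1 - |z|²`: this is AM-GM for `a, p, p`.
-/

open Complex

lemma hasDerivAt_mul_sub_div_sq (c z : ℂ) (hz : 3 - c * z ≠ 0) :
    HasDerivAt (fun w : ℂ => 3 * w * (3 - 2 * c * w) / (3 - c * w) ^ 2)
      (27 * (1 - c * z) / (3 - c * z) ^ 3) z := by
  have hnum : HasDerivAt (fun w : ℂ => 3 * w * (3 - 2 * c * w)) (9 - 12 * c * z) z :=
    (((hasDerivAt_id' z).const_mul 3).fun_mul
      (((hasDerivAt_id' z).const_mul (2 * c)).const_sub 3)).congr_deriv (by ring)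
  have hden : HasDerivAt (fun w : ℂ => (3 - c * w) ^ 2) (-2 * c * (3 - c * z)) z :=
    ((((hasDerivAt_id' z).const_mul c).const_sub 3).fun_pow 2).congr_deriv (by ring)
  refine (hnum.fun_div hden (pow_ne_zero 2 hz)).congr_deriv ?_
  rw [div_eq_div_iff (by positivity) (by positivity)]
  ring

lemma mul_sq_le_add_two_mul_pow_three {a p : ℝ} (ha : 0 ≤ a) (hp : 0 ≤ p) :
    27 * a * p ^ 2 ≤ (a + 2 * p) ^ 3 := by
  -- `(a + 2 p)³ - 27 a p² = (a - p)² (a + 8 p)`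
  nlinarith [mul_nonneg (sq_nonneg (a - p)) (by positivity : 0 ≤ a + 8 * p)]

lemma mul_mul_le_pow_three_of_sq_eq {p u v : ℝ} (hp : 0 ≤ p) (hu : 0 ≤ u) (hv : 0 ≤ v)
    (h : v ^ 2 = 3 * (u ^ 2 + 2 * p)) : 27 * p * u ≤ v ^ 3 := by
  refine (pow_le_pow_iff_left₀ (by positivity) (by positivity) two_ne_zero).mp ?_
  calc (27 * p * u) ^ 2 = 27 * (27 * u ^ 2 * p ^ 2) := by ring
    _ ≤ 27 * (u ^ 2 + 2 * p) ^ 3 := by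
      gcongr
      exact mul_sq_le_add_two_mul_pow_three (sq_nonneg u) hp
    _ = (v ^ 3) ^ 2 := by rw [← pow_mul, show 3 * 2 = 2 * 3 from rfl, pow_mul, h]; ring

lemma norm_sq_three_sub_sqrt_three_mul (z : ℂ) :
    ‖3 - (√3 : ℂ) * z‖ ^ 2 = 3 * (‖1 - (√3 : ℂ) * z‖ ^ 2 + 2 * (1 - ‖z‖ ^ 2)) := by
  have h3 : √3 ^ 2 = 3 := Real.sq_sqrt (by norm_num)
  simp only [Complex.sq_norm, Complex.normSq_apply, sub_re, sub_im, mul_re, mul_im, ofReal_re,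
    ofReal_im, re_ofNat, im_ofNat, one_re, one_im]
  linear_combination (-2) * (z.re ^ 2 + z.im ^ 2) * h3

lemma three_sub_sqrt_three_mul_ne_zero {z : ℂ} (hz : ‖z‖ < 1) : 3 - (√3 : ℂ) * z ≠ 0 := by
  refine sub_ne_zero.mpr fun h => ?_
  have : ‖(√3 : ℂ) * z‖ < 3 := by
    rw [norm_mul, norm_real, Real.norm_of_nonneg (Real.sqrt_nonneg 3)]
    nlinarith [Real.sqrt_nonneg 3, Real.sq_sqrt (show (0:ℝ) ≤ 3 by norm_num), norm_nonneg z]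
  rw [← h] at this
  norm_num at this

lemma one_sub_sq_norm_mul_norm_le_one {z : ℂ} (hz : ‖z‖ < 1) :
    (1 - ‖z‖ ^ 2) * ‖27 * (1 - (√3 : ℂ) * z) / (3 - (√3 : ℂ) * z) ^ 3‖ ≤ 1 := by
  have hpos : 0 < ‖3 - (√3 : ℂ) * z‖ := norm_pos_iff.mpr (three_sub_sqrt_three_mul_ne_zero hz)
  have hp : 0 ≤ 1 - ‖z‖ ^ 2 := by nlinarith [norm_nonneg z]
  rw [norm_div, norm_mul, norm_pow, Complex.norm_ofNat, ← mul_div_assoc, ← mul_assoc,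
    mul_comm _ (27 : ℝ), div_le_one (by positivity)]
  exact mul_mul_le_pow_three_of_sq_eq hp (norm_nonneg _) hpos.le
    (norm_sq_three_sub_sqrt_three_mul z)

theorem stmt15 (f : ℂ → ℂ)
    (hf : ∀ z : ℂ, f z = 3 * z * (3 - 2 * (Real.sqrt 3 : ℂ) * z) /
      (3 - (Real.sqrt 3 : ℂ) * z) ^ 2) :
    f 0 = 0 ∧ deriv f 0 = 1 ∧
      ∀ z : ℂ, ‖z‖ < 1 →
        (1 - ‖z‖ ^ 2) * ‖deriv f z‖ ≤ 1 := by
  have hderiv : ∀ z : ℂ, ‖z‖ < 1 →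
      deriv f z = 27 * (1 - (√3 : ℂ) * z) / (3 - (√3 : ℂ) * z) ^ 3 := fun z hz => by
    rw [funext hf]
    exact (hasDerivAt_mul_sub_div_sq _ z (three_sub_sqrt_three_mul_ne_zero hz)).deriv
  refine ⟨by simp [hf], ?_, fun z hz => ?_⟩
  · rw [hderiv 0 (by simp)]
    norm_num
  · rw [hderiv z hz]
    exact one_sub_sq_norm_mul_norm_le_one hz
end
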